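/- Spine reduction of the FMC is diamond: for any peak N ←s M →s P of single spine-reduction steps, there is a term Q such that N and P each reach Q in at most one spine-reduction step. -/

import Mathlib

/-- Terms of the Functional Machine Calculus over a set `A` of locations,
in de Bruijn representation (so terms are automatically identified up to
α-equivalence): nil, variable prefix, push/application on a location,
and pop/abstraction on a location. -/
inductive Tm (A : Type) : Type
  | star : Tm A
  | var  : Nat → Tm A → Tm A
  | push : Tm A → A → Tm A → Tm A
  | pop  : A → Tm A → Tm A

namespace Tm

variable {A : Type}

/-- Lifting of a renaming under a binder. -/
def liftF (f : Nat → Nat) : Nat → Nat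
  | 0 => 0
  | n+1 => f n + 1

/-- Renaming of de Bruijn indices. -/
def rename (f : Nat → Nat) : Tm A → Tm A
  | star => star
  | var n M => var (f n) (rename f M)
  | push N a M => push (rename f N) a (rename f M)
  | pop a M => pop a (rename (liftF f) M)

/-- Capture-avoiding composition `N ; M`. -/
def comp : Tm A → Tm A → Tm A
  | star, P => P
  | var n N, P => var n (comp N P)
  | push Q a N, P => push Q a (comp N P)
  | pop a N, P => pop a (comp N (rename Nat.succ P))

/-- Lifting of a substitution under a binder. -/
def liftS (σ : Nat → Tm A) : Nat → Tm A
  | 0 => var 0 star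
  | n+1 => rename Nat.succ (σ n)

/-- Capture-avoiding simultaneous substitution; note
`{N/x}(x.M) = N ; {N/x}M`. -/
def subst (σ : Nat → Tm A) : Tm A → Tm A
  | star => star
  | var n M => comp (σ n) (subst σ M)
  | push N a M => push (subst σ N) a (subst σ M)
  | pop a M => pop a (subst (liftS σ) M)

/-- Capture-avoiding substitution `{N/x}M` of `N` for the variable
bound immediately outside `M`. -/
def subst1 (N : Tm A) : Tm A → Tm A :=
  subst (fun n => match n with | 0 => N | n+1 => var n star)

end Tm

/-- Head contexts `H ::= {} | [M]a.H | a<x>.H`. -/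
inductive Hd (A : Type) : Type
  | hole : Hd A
  | push : Tm A → A → Hd A → Hd A
  | pop  : A → Hd A → Hd A

namespace Hd

variable {A : Type}

/-- Plugging a term into the hole of a head context (binders of `H` capture). -/
def plug : Hd A → Tm A → Tm A
  | hole, M => M
  | push N a H, M => Tm.push N a (plug H M)
  | pop a H, M => Tm.pop a (plug H M)

/-- The number of binders of a head context. -/
def binders : Hd A → Nat
  | hole => 0
  | push _ _ H => binders H
  | pop _ H => binders H + 1

/-- The locations occurring along the spine of a head context. -/
def locs : Hd A → List A
  | hole => []
  | push _ a H => a :: locs H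
  | pop a H => a :: locs H

end Hd

/-- Spine reduction of the FMC: the β-rule `[N]a.H.a<x>.M → H.{N/x}M`
(with the location `a` not occurring in `H`) closed under all contexts
except argument position: no reduction inside the argument `N` of a push. -/
inductive SpineStep {A : Type} : Tm A → Tm A → Prop
  | beta (N : Tm A) (a : A) (H : Hd A) (M : Tm A) (h : a ∉ H.locs) :
      SpineStep (Tm.push N a (H.plug (Tm.pop a M)))
                (H.plug (Tm.subst1 (Tm.rename (· + H.binders) N) M))
  | var {M M' : Tm A} (n : Nat) : SpineStep M M' → SpineStep (Tm.var n M) (Tm.var n M')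
  | pushL {M M' : Tm A} (N : Tm A) (a : A) :
      SpineStep M M' → SpineStep (Tm.push N a M) (Tm.push N a M')
  | pop {M M' : Tm A} (a : A) : SpineStep M M' → SpineStep (Tm.pop a M) (Tm.pop a M')

/-
Spine reduction never enters an argument, so of two redexes in a term neither lies inside the
argument of the other, and contracting one leaves exactly one residual of the other. The only
non-trivial peak is a β-redex `[N]a.H.a<x>.M` against a step inside `H.a<x>.M`. Since `a ∉ H`,
that step (inside `M`, or contracting a redex whose push lies in `H` and whose pop lies in `H` or
in `M`) keeps the shape `H'.a<x>.M'` with `a ∉ H'`, and it can be replayed on the contractum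
`H.{N/x}M`. Replaying rests on spine steps being stable under renaming and substitution, that is,
on substitution commuting with the formation of contracta (`Tm.subst_betaReduct`).
-/

namespace Tm

variable {A : Type}

theorem rename_congr {f g : Nat → Nat} (h : ∀ n, f n = g n) (M : Tm A) :
    rename f M = rename g M := by rw [funext h]

theorem subst_congr {σ τ : Nat → Tm A} (h : ∀ n, σ n = τ n) (M : Tm A) :
    subst σ M = subst τ M := by rw [funext h]

theorem liftF_liftF (f g : Nat → Nat) (n : Nat) :
    liftF f (liftF g n) = liftF (fun n => f (g n)) n := by cases n <;> rfl

theorem rename_rename (f g : Nat → Nat) (M : Tm A) :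
    rename f (rename g M) = rename (fun n => f (g n)) M := by
  induction M generalizing f g with
  | star => rfl
  | var n M ih => simp only [rename, ih]
  | push N a M ihN ihM => simp only [rename, ihN, ihM]
  | pop a M ih =>
    simp only [rename, ih]
    exact congrArg _ (rename_congr (liftF_liftF f g) M)

theorem rename_add_rename_add (i j : Nat) (N : Tm A) :
    rename (· + j) (rename (· + i) N) = rename (· + (i + j)) N := by
  rw [rename_rename]
  exact rename_congr (fun n => by omega) N

theorem rename_comp (f : Nat → Nat) (M N : Tm A) :
    rename f (comp M N) = comp (rename f M) (rename f N) := by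
  induction M generalizing f N with
  | star => rfl
  | var n M ih => simp only [comp, rename, ih]
  | push Q a M _ ih => simp only [comp, rename, ih]
  | pop a M ih =>
    simp only [comp, rename, ih, rename_rename]
    rfl

theorem comp_star (M : Tm A) : comp M star = M := by
  induction M with
  | star => rfl
  | var n M ih => simp only [comp, ih]
  | push Q a M _ ih => simp only [comp, ih]
  | pop a M ih => exact congrArg _ ih

theorem comp_assoc (M N P : Tm A) : comp (comp M N) P = comp M (comp N P) := by
  induction M generalizing N P with
  | star => rfl
  | var n M ih => simp only [comp, ih]
  | push Q a M _ ih => simp only [comp, ih]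
  | pop a M ih => simp only [comp, ih, rename_comp]

theorem liftS_liftF (σ : Nat → Tm A) (f : Nat → Nat) (n : Nat) :
    liftS σ (liftF f n) = liftS (fun n => σ (f n)) n := by cases n <;> rfl

theorem subst_rename (σ : Nat → Tm A) (f : Nat → Nat) (M : Tm A) :
    subst σ (rename f M) = subst (fun n => σ (f n)) M := by
  induction M generalizing σ f with
  | star => rfl
  | var n M ih => simp only [rename, subst, ih]
  | push N a M ihN ihM => simp only [rename, subst, ihN, ihM]
  | pop a M ih =>
    simp only [rename, subst, ih]
    exact congrArg _ (subst_congr (liftS_liftF σ f) M)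

theorem rename_subst (f : Nat → Nat) (σ : Nat → Tm A) (M : Tm A) :
    rename f (subst σ M) = subst (fun n => rename f (σ n)) M := by
  induction M generalizing σ f with
  | star => rfl
  | var n M ih => simp only [subst, rename_comp, ih]
  | push N a M ihN ihM => simp only [subst, rename, ihN, ihM]
  | pop a M ih =>
    simp only [subst, rename, ih]
    refine congrArg _ (subst_congr (fun n => ?_) M)
    cases n with
    | zero => rfl
    | succ n => simp only [liftS, rename_rename]; rfl

theorem subst_comp (σ : Nat → Tm A) (M N : Tm A) :
    subst σ (comp M N) = comp (subst σ M) (subst σ N) := by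
  induction M generalizing σ N with
  | star => rfl
  | var n M ih => simp only [comp, subst, ih, comp_assoc]
  | push Q a M _ ih => simp only [comp, subst, ih]
  | pop a M ih =>
    simp only [comp, subst, ih, subst_rename, rename_subst]
    rfl

theorem subst_var_star (σ : Nat → Tm A) (m : Nat) : subst σ (var m star) = σ m :=
  comp_star (σ m)

theorem subst_subst (τ σ : Nat → Tm A) (M : Tm A) :
    subst τ (subst σ M) = subst (fun n => subst τ (σ n)) M := by
  induction M generalizing τ σ with
  | star => rfl
  | var n M ih => simp only [subst, subst_comp, ih]
  | push N a M ihN ihM => simp only [subst, ihN, ihM]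
  | pop a M ih =>
    simp only [subst, ih]
    refine congrArg _ (subst_congr (fun n => ?_) M)
    cases n with
    | zero => exact subst_var_star (liftS τ) 0
    | succ n => simp only [liftS, subst_rename, rename_subst]

theorem subst_eq_rename (f : Nat → Nat) (M : Tm A) :
    subst (fun n => var (f n) star) M = rename f M := by
  induction M generalizing f with
  | star => rfl
  | var n M ih => simp only [subst, comp, rename, ih]
  | push N a M ihN ihM => simp only [subst, rename, ihN, ihM]
  | pop a M ih =>
    simp only [subst, rename]
    refine congrArg _ (Eq.trans (subst_congr (fun n => ?_) M) (ih (liftF f)))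
    cases n <;> rfl

theorem rename_id (M : Tm A) : rename (fun n => n) M = M := by
  induction M with
  | star => rfl
  | var n M ih => simp only [rename, ih]
  | push N a M ihN ihM => simp only [rename, ihN, ihM]
  | pop a M ih =>
    simp only [rename]
    exact congrArg _ (Eq.trans (rename_congr (fun n => by cases n <;> rfl) M) ih)

def single (N : Tm A) : Nat → Tm A
  | 0 => N
  | n + 1 => var n star

theorem subst1_eq_subst_single (N : Tm A) : subst1 N = subst (single N) := rfl

theorem subst_single_rename_add_succ (Q P : Tm A) (c : Nat) :
    subst (single Q) (rename (· + (c + 1)) P) = rename (· + c) P := by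
  rw [subst_rename]
  exact subst_eq_rename (· + c) P

theorem subst_single_rename_succ (Q P : Tm A) : subst (single Q) (rename Nat.succ P) = P := by
  rw [subst_rename]
  exact (subst_eq_rename (fun n => n) P).trans (rename_id P)

theorem iterate_liftF_add (k : Nat) (f : Nat → Nat) (n : Nat) :
    liftF^[k] f (n + k) = f n + k := by
  induction k with
  | zero => rfl
  | succ k ih =>
    rw [Function.iterate_succ_apply']
    show liftF^[k] f (n + k) + 1 = _
    omega

theorem iterate_liftS_add (k : Nat) (σ : Nat → Tm A) (n : Nat) :
    liftS^[k] σ (n + k) = rename (· + k) (σ n) := by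
  induction k with
  | zero => exact (rename_id _).symm
  | succ k ih =>
    rw [Function.iterate_succ_apply']
    show rename Nat.succ (liftS^[k] σ (n + k)) = _
    rw [ih, rename_rename]
    rfl

theorem rename_iterate_liftF_subst1 (f : Nat → Nat) (N M : Tm A) (j : Nat) :
    rename (liftF^[j] f) (subst1 (rename (· + j) N) M)
      = subst1 (rename (· + j) (rename f N)) (rename (liftF (liftF^[j] f)) M) := by
  rw [subst1_eq_subst_single, subst1_eq_subst_single, rename_subst, subst_rename]
  refine subst_congr (fun n => ?_) M
  cases n with
  | zero =>
    show rename (liftF^[j] f) (rename (· + j) N) = rename (· + j) (rename f N)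
    rw [rename_rename, rename_rename]
    exact rename_congr (iterate_liftF_add j f) N
  | succ m => rfl

theorem subst_iterate_liftS_subst1 (σ : Nat → Tm A) (N M : Tm A) (j : Nat) :
    subst (liftS^[j] σ) (subst1 (rename (· + j) N) M)
      = subst1 (rename (· + j) (subst σ N)) (subst (liftS (liftS^[j] σ)) M) := by
  rw [subst1_eq_subst_single, subst1_eq_subst_single, subst_subst, subst_subst]
  refine subst_congr (fun n => ?_) M
  cases n with
  | zero =>
    show _ = subst _ (var 0 star)
    rw [subst_var_star]
    show subst (liftS^[j] σ) (rename (· + j) N) = rename (· + j) (subst σ N)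
    rw [subst_rename, rename_subst]
    exact subst_congr (iterate_liftS_add j σ) N
  | succ m =>
    show subst _ (var m star) = subst _ (rename Nat.succ _)
    rw [subst_var_star, subst_single_rename_succ]

end Tm

namespace Hd

variable {A : Type}

def append : Hd A → Hd A → Hd A
  | hole, K => K
  | push N a H, K => push N a (append H K)
  | pop a H, K => pop a (append H K)

instance : Append (Hd A) := ⟨append⟩

@[simp] theorem plug_append (H K : Hd A) (M : Tm A) : (H ++ K).plug M = H.plug (K.plug M) := by
  induction H with
  | hole => rfl
  | push N a H ih => exact congrArg _ ih
  | pop a H ih => exact congrArg _ ih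

@[simp] theorem binders_append (H K : Hd A) : (H ++ K).binders = H.binders + K.binders := by
  induction H with
  | hole => exact (Nat.zero_add _).symm
  | push N a H ih => exact ih
  | pop a H ih => exact (congrArg (· + 1) ih).trans (Nat.add_right_comm ..)

@[simp] theorem locs_append (H K : Hd A) : (H ++ K).locs = H.locs ++ K.locs := by
  induction H with
  | hole => rfl
  | push N a H ih => exact congrArg (a :: ·) ih
  | pop a H ih => exact congrArg (a :: ·) ih

def rename (f : Nat → Nat) : Hd A → Hd A
  | hole => hole
  | push N a H => push (N.rename f) a (rename f H)
  | pop a H => pop a (rename (Tm.liftF f) H)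

def subst (σ : Nat → Tm A) : Hd A → Hd A
  | hole => hole
  | push N a H => push (N.subst σ) a (subst σ H)
  | pop a H => pop a (subst (Tm.liftS σ) H)

@[simp] theorem binders_rename (f : Nat → Nat) (H : Hd A) : (H.rename f).binders = H.binders := by
  induction H generalizing f with
  | hole => rfl
  | push N a H ih => exact ih f
  | pop a H ih => exact congrArg (· + 1) (ih _)

@[simp] theorem locs_rename (f : Nat → Nat) (H : Hd A) : (H.rename f).locs = H.locs := by
  induction H generalizing f with
  | hole => rfl
  | push N a H ih => exact congrArg (a :: ·) (ih f)
  | pop a H ih => exact congrArg (a :: ·) (ih _)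

@[simp] theorem binders_subst (σ : Nat → Tm A) (H : Hd A) : (H.subst σ).binders = H.binders := by
  induction H generalizing σ with
  | hole => rfl
  | push N a H ih => exact ih σ
  | pop a H ih => exact congrArg (· + 1) (ih _)

@[simp] theorem locs_subst (σ : Nat → Tm A) (H : Hd A) : (H.subst σ).locs = H.locs := by
  induction H generalizing σ with
  | hole => rfl
  | push N a H ih => exact congrArg (a :: ·) (ih σ)
  | pop a H ih => exact congrArg (a :: ·) (ih _)

/-- The contractum `H.{N/x}M` of the redex `[N]a.H.a<x>.M`. -/
def betaReduct (H : Hd A) (N M : Tm A) : Tm A :=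
  H.plug (Tm.subst1 (Tm.rename (· + H.binders) N) M)

theorem betaReduct_pop (a : A) (H : Hd A) (N M : Tm A) :
    (pop a H).betaReduct N M = Tm.pop a (H.betaReduct (N.rename (· + 1)) M) := by
  simp only [betaReduct, plug, binders, Tm.rename_add_rename_add]
  rw [Nat.add_comm]

theorem betaReduct_append (H K : Hd A) (N M : Tm A) :
    (H ++ K).betaReduct N M = H.plug (K.betaReduct (N.rename (· + H.binders)) M) := by
  simp only [betaReduct, plug_append, binders_append, Tm.rename_add_rename_add]

theorem betaReduct_eq_plug_subst (H : Hd A) (N M : Tm A) :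
    H.betaReduct N M = H.plug (Tm.subst (Tm.single (N.rename (· + H.binders))) M) := rfl

theorem betaReduct_append_pop (H K : Hd A) (a : A) (N M : Tm A) :
    (H ++ pop a K).betaReduct N M
      = H.plug (Tm.pop a (K.betaReduct (N.rename (· + (H.binders + 1))) M)) := by
  rw [betaReduct_append, betaReduct_pop, Tm.rename_add_rename_add]

theorem cases_of_plug_pop_eq_plug_pop {a b : A} {M M' : Tm A} {H K : Hd A}
    (h : H.plug (.pop a M) = K.plug (.pop b M')) :
    (H = K ∧ a = b ∧ M = M') ∨ (∃ K', K = H ++ pop a K' ∧ M = K'.plug (.pop b M')) ∨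
      ∃ H', H = K ++ pop b H' ∧ M' = H'.plug (.pop a M) := by
  induction H generalizing K with
  | hole =>
    cases K with
    | hole => simp_all [plug]
    | push => simp [plug] at h
    | pop c K =>
      obtain ⟨rfl, rfl⟩ := Tm.pop.inj h
      exact Or.inr (Or.inl ⟨K, rfl, rfl⟩)
  | push N c H ih =>
    cases K with
    | push N' c' K =>
      obtain ⟨rfl, rfl, hHK⟩ := Tm.push.inj h
      rcases ih hHK with ⟨rfl, rfl, rfl⟩ | ⟨K', rfl, rfl⟩ | ⟨H', rfl, rfl⟩
      exacts [.inl ⟨rfl, rfl, rfl⟩, .inr (.inl ⟨K', rfl, rfl⟩), .inr (.inr ⟨H', rfl, rfl⟩)]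
    | _ => simp [plug] at h
  | pop c H ih =>
    cases K with
    | hole =>
      obtain ⟨rfl, rfl⟩ := Tm.pop.inj h
      exact Or.inr (Or.inr ⟨H, rfl, rfl⟩)
    | pop c' K =>
      obtain ⟨rfl, hHK⟩ := Tm.pop.inj h
      rcases ih hHK with ⟨rfl, rfl, rfl⟩ | ⟨K', rfl, rfl⟩ | ⟨H', rfl, rfl⟩
      exacts [.inl ⟨rfl, rfl, rfl⟩, .inr (.inl ⟨K', rfl, rfl⟩), .inr (.inr ⟨H', rfl, rfl⟩)]
    | push => simp [plug] at h

end Hd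

namespace Tm

variable {A : Type}

theorem rename_plug (f : Nat → Nat) (H : Hd A) (M : Tm A) :
    rename f (H.plug M) = (H.rename f).plug (rename (liftF^[H.binders] f) M) := by
  induction H generalizing f with
  | hole => rfl
  | push N a H ih => exact congrArg _ (ih f)
  | pop a H ih => exact congrArg _ (ih _)

theorem subst_plug (σ : Nat → Tm A) (H : Hd A) (M : Tm A) :
    subst σ (H.plug M) = (H.subst σ).plug (subst (liftS^[H.binders] σ) M) := by
  induction H generalizing σ with
  | hole => rfl
  | push N a H ih => exact congrArg _ (ih σ)
  | pop a H ih => exact congrArg _ (ih _)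

theorem rename_betaReduct (f : Nat → Nat) (H : Hd A) (N M : Tm A) :
    rename f (H.betaReduct N M)
      = (H.rename f).betaReduct (rename f N) (rename (liftF (liftF^[H.binders] f)) M) := by
  rw [Hd.betaReduct, rename_plug, rename_iterate_liftF_subst1, Hd.betaReduct, Hd.binders_rename]

theorem subst_betaReduct (σ : Nat → Tm A) (H : Hd A) (N M : Tm A) :
    subst σ (H.betaReduct N M)
      = (H.subst σ).betaReduct (subst σ N) (subst (liftS (liftS^[H.binders] σ)) M) := by
  rw [Hd.betaReduct, subst_plug, subst_iterate_liftS_subst1, Hd.betaReduct, Hd.binders_subst]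

end Tm

namespace SpineStep

variable {A : Type}

open Tm

theorem push_plug_pop {N M : Tm A} {a : A} {H : Hd A} (ha : a ∉ H.locs) :
    SpineStep (Tm.push N a (H.plug (Tm.pop a M))) (H.betaReduct N M) :=
  beta N a H M ha

theorem push_inv {N X Y : Tm A} {a : A} (h : SpineStep (Tm.push N a X) Y) :
    (∃ X', Y = Tm.push N a X' ∧ SpineStep X X') ∨
      ∃ (H : Hd A) (M : Tm A), X = H.plug (Tm.pop a M) ∧ a ∉ H.locs ∧ Y = H.betaReduct N M := by
  cases h with
  | beta N a H M ha => exact Or.inr ⟨H, M, rfl, ha, rfl⟩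
  | pushL N a h => exact Or.inl ⟨_, rfl, h⟩

theorem pop_inv {a : A} {X Y : Tm A} (h : SpineStep (Tm.pop a X) Y) :
    ∃ X', Y = Tm.pop a X' ∧ SpineStep X X' := by
  cases h with
  | pop a h => exact ⟨_, rfl, h⟩

theorem var_inv {n : Nat} {X Y : Tm A} (h : SpineStep (Tm.var n X) Y) :
    ∃ X', Y = Tm.var n X' ∧ SpineStep X X' := by
  cases h with
  | var n h => exact ⟨_, rfl, h⟩

protected theorem rename {M M' : Tm A} (h : SpineStep M M') (f : Nat → Nat) :
    SpineStep (M.rename f) (M'.rename f) := by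
  induction h generalizing f with
  | beta N a H M ha =>
    show SpineStep (Tm.push _ a (rename f (H.plug (Tm.pop a M)))) (rename f (H.betaReduct N M))
    rw [rename_plug, rename_betaReduct]
    exact push_plug_pop (by simpa using ha)
  | var n _ ih => exact (ih f).var (f n)
  | pushL N a _ ih => exact (ih f).pushL _ a
  | pop a _ ih => exact (ih _).pop a

theorem comp_right (P : Tm A) {X X' : Tm A} (h : SpineStep X X') :
    SpineStep (P.comp X) (P.comp X') := by
  induction P generalizing X X' with
  | star => exact h
  | var n M ih => exact (ih h).var n
  | push Q a M _ ih => exact (ih h).pushL Q a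
  | pop a M ih => exact (ih (h.rename Nat.succ)).pop a

protected theorem subst {M M' : Tm A} (h : SpineStep M M') (σ : Nat → Tm A) :
    SpineStep (M.subst σ) (M'.subst σ) := by
  induction h generalizing σ with
  | beta N a H M ha =>
    show SpineStep (Tm.push _ a (subst σ (H.plug (Tm.pop a M)))) (subst σ (H.betaReduct N M))
    rw [subst_plug, subst_betaReduct]
    exact push_plug_pop (by simpa using ha)
  | var n _ ih => exact comp_right (σ n) (ih σ)
  | pushL N a _ ih => exact (ih σ).pushL _ a
  | pop a _ ih => exact (ih _).pop a

theorem push_betaReduct_plug_pop {P N M : Tm A} {b : A} {H K : Hd A}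
    (hbH : b ∉ H.locs) (hbK : b ∉ K.locs) :
    SpineStep (Tm.push P b (H.betaReduct N (K.plug (Tm.pop b M))))
      (H.betaReduct N (K.betaReduct (P.rename (· + (H.binders + 1))) M)) := by
  set σ := single (N.rename (· + H.binders))
  have h := push_plug_pop (N := P) (M := subst (liftS (liftS^[K.binders] σ)) M)
    (H := H ++ K.subst σ) (a := b) (by simp [hbH, hbK])
  rw [Hd.plug_append, Hd.betaReduct_append] at h
  rw [Hd.betaReduct_eq_plug_subst H, Hd.betaReduct_eq_plug_subst H, subst_plug,
    subst_betaReduct, subst_single_rename_add_succ]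
  exact h

theorem push_betaReduct_append_pop {P N M : Tm A} {b : A} {K H : Hd A} (hbK : b ∉ K.locs) :
    SpineStep (Tm.push P b ((K ++ Hd.pop b H).betaReduct N M))
      ((K ++ H.subst (single (P.rename (· + K.binders)))).betaReduct N
        (subst (liftS (liftS^[H.binders] (single (P.rename (· + K.binders))))) M)) := by
  have h := push_plug_pop (N := P) (M := H.betaReduct (N.rename (· + (K.binders + 1))) M) hbK
  rwa [Hd.betaReduct_eq_plug_subst K, subst_betaReduct, subst_single_rename_add_succ,
    ← Hd.betaReduct_append, ← Hd.betaReduct_append_pop] at h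

/-- After a step inside it, the redex `[N]a.H.a<x>.M` has the residual `[N]a.H'.a<x>.M'`,
and the two contracta are one step apart. -/
theorem residual {a : A} {H : Hd A} {M Y : Tm A} (ha : a ∉ H.locs)
    (h : SpineStep (H.plug (Tm.pop a M)) Y) :
    ∃ (H' : Hd A) (M' : Tm A), Y = H'.plug (Tm.pop a M') ∧ a ∉ H'.locs ∧
      ∀ N, SpineStep (H.betaReduct N M) (H'.betaReduct N M') := by
  induction H generalizing Y with
  | hole =>
    obtain ⟨M', rfl, hM⟩ := pop_inv h
    exact ⟨.hole, M', rfl, ha, fun N => hM.subst _⟩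
  | pop b H ih =>
    simp only [Hd.locs, List.mem_cons, not_or] at ha
    obtain ⟨Y', rfl, hY⟩ := pop_inv h
    obtain ⟨H', M', rfl, ha', hstep⟩ := ih ha.2 hY
    refine ⟨.pop b H', M', rfl, by simp [Hd.locs, ha.1, ha'], fun N => ?_⟩
    simpa only [Hd.betaReduct_pop] using (hstep (N.rename (· + 1))).pop b
  | push P b H ih =>
    simp only [Hd.locs, List.mem_cons, not_or] at ha
    rcases push_inv h with ⟨Y', rfl, hY⟩ | ⟨K, M₁, hK, hbK, rfl⟩
    · obtain ⟨H', M', rfl, ha', hstep⟩ := ih ha.2 hY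
      exact ⟨.push P b H', M', rfl, by simp [Hd.locs, ha.1, ha'], fun N => (hstep N).pushL P b⟩
    rcases Hd.cases_of_plug_pop_eq_plug_pop hK with ⟨-, rfl, -⟩ | ⟨K', rfl, rfl⟩ | ⟨H', rfl, rfl⟩
    · exact absurd rfl ha.1
    · simp only [Hd.locs_append, Hd.locs, List.mem_append, List.mem_cons, not_or] at hbK
      exact ⟨H, _, Hd.betaReduct_append_pop .., ha.2, fun N => push_betaReduct_plug_pop hbK.1 hbK.2.2⟩
    · simp only [Hd.locs_append, Hd.locs, List.mem_append, List.mem_cons, not_or] at ha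
      refine ⟨_, _, ?_, by simp [ha.2.1, ha.2.2.2], fun N => push_betaReduct_append_pop hbK⟩
      rw [Hd.betaReduct_eq_plug_subst, subst_plug, Hd.plug_append]
      rfl

theorem join_of_beta {N M P : Tm A} {a : A} {H : Hd A} (ha : a ∉ H.locs)
    (h : SpineStep (Tm.push N a (H.plug (Tm.pop a M))) P) :
    Relation.Join (Relation.ReflGen SpineStep) (H.betaReduct N M) P := by
  rcases push_inv h with ⟨X, rfl, hX⟩ | ⟨K, M', hK, haK, rfl⟩
  · obtain ⟨H', M', rfl, ha', hstep⟩ := residual ha hX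
    exact ⟨_, .single (hstep N), .single (push_plug_pop ha')⟩
  rcases Hd.cases_of_plug_pop_eq_plug_pop hK with ⟨rfl, -, rfl⟩ | ⟨K', rfl, -⟩ | ⟨H', rfl, -⟩
  · exact ⟨_, .refl, .refl⟩
  · simp [Hd.locs] at haK
  · simp [Hd.locs] at ha

end SpineStep

theorem Relation.ReflGen.lift {α β : Type*} {r : α → α → Prop} {p : β → β → Prop} {a b : α}
    (f : α → β) (h : ∀ x y, r x y → p (f x) (f y)) : ReflGen r a b → ReflGen p (f a) (f b)
  | .refl => .refl
  | .single hab => .single (h _ _ hab)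

theorem Relation.Join.reflGen_lift {α : Type*} {r : α → α → Prop} {a b : α} (f : α → α)
    (hf : ∀ x y, r x y → r (f x) (f y)) : Join (ReflGen r) a b → Join (ReflGen r) (f a) (f b)
  | ⟨c, hac, hbc⟩ => ⟨f c, hac.lift f hf, hbc.lift f hf⟩

/-- Spine reduction is diamond: any peak of single spine steps converges,
with each side reaching the common reduct in at most one spine step. -/
theorem fmc_spine_diamond {A : Type} (M N P : Tm A)
    (hN : SpineStep M N) (hP : SpineStep M P) :
    ∃ Q : Tm A, Relation.ReflGen SpineStep N Q ∧ Relation.ReflGen SpineStep P Q := by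
  induction hN generalizing P with
  | beta N a H M ha => exact SpineStep.join_of_beta ha hP
  | var n _ ih =>
    obtain ⟨X, rfl, hX⟩ := hP.var_inv
    exact Relation.Join.reflGen_lift _ (fun _ _ h => h.var n) (ih X hX)
  | pushL N a h ih =>
    rcases hP.push_inv with ⟨X, rfl, hX⟩ | ⟨K, M, rfl, ha, rfl⟩
    · exact Relation.Join.reflGen_lift _ (fun _ _ h => h.pushL N a) (ih X hX)
    · obtain ⟨Q, hQ, hQ'⟩ := SpineStep.join_of_beta ha (h.pushL N a)
      exact ⟨Q, hQ', hQ⟩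
  | pop a _ ih =>
    obtain ⟨X, rfl, hX⟩ := hP.pop_inv
    exact Relation.Join.reflGen_lift _ (fun _ _ h => h.pop a) (ih X hX)
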